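/- arXiv:2104.05252 — 2 statements merged into one kernel-verified Lean document; each statement's English description precedes it below -/
import Mathlib

section
/- For the Boltzmann-tilted family q_β on a finite type, the second derivative of D_KL(q_β ‖ p) with respect to β equals Var_{q_β}(f) + β · E_{q_β}[(f − E_{q_β}[f])³]. -/
/-! With `Z = ∑ p e^{βf}` and `q_β = p e^{βf} / Z`, every `q_β`-average `E_β[g]` satisfies
`d/dβ E_β[g] = E_β[g f] - E_β[g] E_β[f]`. Since `D_KL(q_β ‖ p) = β E_β[f] - log Z(β)` and
`(log Z)' = E_β[f]`, the first derivative is `β Var_β(f)`, and the covariance rule applied to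
`f²` and `f` turns `Var_β(f)'` into the third central moment. -/

open Real Finset

theorem Finset.sum_mul_sub_pow_three {ι : Type*} (s : Finset ι) (w g : ι → ℝ) (c : ℝ) :
    ∑ i ∈ s, w i * (g i - c) ^ 3
      = ∑ i ∈ s, w i * g i ^ 3 - 3 * c * ∑ i ∈ s, w i * g i ^ 2
        + 3 * c ^ 2 * ∑ i ∈ s, w i * g i - c ^ 3 * ∑ i ∈ s, w i := by
  simp only [mul_sum, ← sum_sub_distrib, ← sum_add_distrib]
  exact sum_congr rfl fun i _ => by ring

namespace Tilt

variable {X : Type*} [Fintype X] (p f : X → ℝ)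

noncomputable def partition (b : ℝ) : ℝ := ∑ x, p x * exp (b * f x)

noncomputable def weight (b : ℝ) (x : X) : ℝ := p x * exp (b * f x) / partition p f b

theorem hasDerivAt_sum_mul_exp (c : X → ℝ) (b : ℝ) :
    HasDerivAt (fun b => ∑ x, c x * exp (b * f x)) (∑ x, c x * f x * exp (b * f x)) b := by
  refine HasDerivAt.fun_sum fun x _ =>
    ((((hasDerivAt_id b).mul_const (f x)).exp).const_mul (c x)).congr_deriv ?_
  simp only [id_eq, one_mul]
  ring

variable {p f}

theorem partition_pos [Nonempty X] (hp : ∀ x, 0 < p x) (b : ℝ) : 0 < partition p f b :=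
  sum_pos (fun x _ => mul_pos (hp x) (exp_pos _)) univ_nonempty

theorem sum_weight_mul (g : X → ℝ) (b : ℝ) :
    ∑ x, weight p f b x * g x = (∑ x, p x * g x * exp (b * f x)) / partition p f b := by
  rw [sum_div]
  exact sum_congr rfl fun x _ => by rw [weight]; ring

theorem sum_weight {b : ℝ} (hZ : partition p f b ≠ 0) : ∑ x, weight p f b x = 1 := by
  have h := sum_weight_mul (p := p) (f := f) (fun _ => 1) b
  simp only [mul_one] at h
  exact h.trans (div_self hZ)

theorem hasDerivAt_sum_weight_mul {b : ℝ} (hZ : partition p f b ≠ 0) (g : X → ℝ) :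
    HasDerivAt (fun b => ∑ x, weight p f b x * g x)
      (∑ x, weight p f b x * (g x * f x)
        - (∑ x, weight p f b x * g x) * ∑ x, weight p f b x * f x) b := by
  have hZ' : HasDerivAt (partition p f) (∑ x, p x * f x * exp (b * f x)) b :=
    hasDerivAt_sum_mul_exp f p b
  have hquot := (hasDerivAt_sum_mul_exp f (fun x => p x * g x) b).div hZ' hZ
  simp only [sum_weight_mul]
  refine hquot.congr_deriv ?_
  simp only [mul_assoc]
  rw [sub_div, sq, mul_div_mul_right _ _ hZ, div_mul_div_comm]

theorem hasDerivAt_log_partition {b : ℝ} (hZ : partition p f b ≠ 0) :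
    HasDerivAt (fun b => log (partition p f b)) (∑ x, weight p f b x * f x) b := by
  rw [sum_weight_mul]
  exact (hasDerivAt_sum_mul_exp f p b).log hZ

theorem weight_mul_log_weight_div {b : ℝ} (hZ : partition p f b ≠ 0) (x : X) :
    weight p f b x * log (weight p f b x / p x)
      = weight p f b x * (b * f x - log (partition p f b)) := by
  rcases eq_or_ne (p x) 0 with hpx | hpx
  · simp [weight, hpx]
  · have hratio : weight p f b x / p x = exp (b * f x) / partition p f b := by
      rw [weight]; field_simp
    rw [hratio, log_div (exp_ne_zero _) hZ, log_exp]

theorem sum_weight_mul_log_weight_div {b : ℝ} (hZ : partition p f b ≠ 0) :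
    ∑ x, weight p f b x * log (weight p f b x / p x)
      = b * ∑ x, weight p f b x * f x - log (partition p f b) := by
  simp only [weight_mul_log_weight_div hZ, mul_sub, sum_sub_distrib, ← sum_mul, sum_weight hZ,
    mul_sum, one_mul]
  exact congrArg (· - _) (sum_congr rfl fun x _ => mul_left_comm _ _ _)

theorem hasDerivAt_kl_weight (hZ : ∀ b, partition p f b ≠ 0) (b : ℝ) :
    HasDerivAt (fun b => ∑ x, weight p f b x * log (weight p f b x / p x))
      (b * ((∑ x, weight p f b x * f x ^ 2) - (∑ x, weight p f b x * f x) ^ 2)) b := by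
  simp only [sum_weight_mul_log_weight_div (hZ _)]
  refine (((hasDerivAt_id b).fun_mul (hasDerivAt_sum_weight_mul (hZ b) f)).fun_sub
    (hasDerivAt_log_partition (hZ b))).congr_deriv ?_
  simp only [id, sq]
  ring

theorem hasDerivAt_variance_weight {b : ℝ} (hZ : partition p f b ≠ 0) :
    HasDerivAt (fun b => (∑ x, weight p f b x * f x ^ 2) - (∑ x, weight p f b x * f x) ^ 2)
      (∑ x, weight p f b x * (f x - ∑ y, weight p f b y * f y) ^ 3) b := by
  refine ((hasDerivAt_sum_weight_mul hZ (f · ^ 2)).fun_sub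
    ((hasDerivAt_sum_weight_mul hZ f).fun_pow 2)).congr_deriv ?_
  rw [sum_mul_sub_pow_three, sum_weight hZ]
  simp only [← pow_succ, ← sq]
  ring

end Tilt

open Tilt

theorem second_deriv_kl_general {X : Type*} [Fintype X] [Nonempty X]
    (p : X → ℝ) (hp0 : ∀ x, 0 < p x)
    (f : X → ℝ) (β : ℝ)
    (q : ℝ → X → ℝ)
    (hq : ∀ b x, q b x = p x * Real.exp (b * f x) / (∑ y, p y * Real.exp (b * f y))) :
    deriv (deriv (fun b : ℝ => ∑ x, q b x * Real.log (q b x / p x))) β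
      = ((∑ x, q β x * (f x) ^ 2) - (∑ x, q β x * f x) ^ 2)
        + β * ∑ x, q β x * (f x - ∑ y, q β y * f y) ^ 3 := by
  obtain rfl : q = weight p f := funext fun b => funext (hq b)
  have hZ : ∀ b, partition p f b ≠ 0 := fun b => (partition_pos hp0 b).ne'
  rw [funext fun b => (hasDerivAt_kl_weight hZ b).deriv,
    ((hasDerivAt_id' β).fun_mul (hasDerivAt_variance_weight (hZ β))).deriv, one_mul]

theorem second_deriv_kl {X : Type*} [Fintype X] [Nonempty X]
    (p : X → ℝ) (hp0 : ∀ x, 0 < p x) (hp1 : ∑ x, p x = 1)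
    (f : X → ℝ) (β : ℝ)
    (q : ℝ → X → ℝ)
    (hq : ∀ b x, q b x = p x * Real.exp (b * f x) / (∑ y, p y * Real.exp (b * f y))) :
    deriv (deriv (fun b : ℝ => ∑ x, q b x * Real.log (q b x / p x))) β
      = ((∑ x, q β x * (f x) ^ 2) - (∑ x, q β x * f x) ^ 2)
        + β * ∑ x, q β x * (f x - ∑ y, q β y * f y) ^ 3 :=
  second_deriv_kl_general p hp0 f β q hq
end

section
/- The map β ↦ D_KL(q_β ‖ p) is monotone nondecreasing on [0, ∞) for the Boltzmann-tilted family q_β on a finite type. -/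
/-! With `Z(β) = ∑ p e^{βf}` and `m(β) = E_{q_β}[f] = Z'/Z`, the divergence is
`D(β) = β m(β) - log Z(β)`. Since `(log Z)' = m` and `m' = Var_{q_β}(f)`, this gives
`D'(β) = β Var_{q_β}(f)`, which is nonnegative for `β ≥ 0` by Cauchy–Schwarz. -/

open Real Finset

section TiltedFamily

variable {ι : Type*} [Fintype ι] (p f : ι → ℝ)

noncomputable def tiltMoment (n : ℕ) (b : ℝ) : ℝ :=
  ∑ x, p x * f x ^ n * exp (b * f x)

noncomputable def tilt (b : ℝ) (x : ι) : ℝ :=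
  p x * exp (b * f x) / tiltMoment p f 0 b

noncomputable def tiltMean (b : ℝ) : ℝ :=
  tiltMoment p f 1 b / tiltMoment p f 0 b

noncomputable def tiltVariance (b : ℝ) : ℝ :=
  tiltMoment p f 2 b / tiltMoment p f 0 b - tiltMean p f b ^ 2

theorem tiltMoment_zero (b : ℝ) : tiltMoment p f 0 b = ∑ x, p x * exp (b * f x) := by
  simp [tiltMoment]

theorem tiltMoment_zero_pos [Nonempty ι] (hp : ∀ x, 0 < p x) (b : ℝ) :
    0 < tiltMoment p f 0 b := by
  rw [tiltMoment_zero]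
  exact sum_pos (fun x _ => mul_pos (hp x) (exp_pos _)) univ_nonempty

theorem hasDerivAt_tiltMoment (n : ℕ) (b : ℝ) :
    HasDerivAt (tiltMoment p f n) (tiltMoment p f (n + 1) b) b :=
  HasDerivAt.fun_sum fun x _ =>
    (((hasDerivAt_mul_const (f x)).exp).const_mul (p x * f x ^ n)).congr_deriv (by ring)

theorem tiltMoment_one_sq_le (hp : ∀ x, 0 ≤ p x) (b : ℝ) :
    tiltMoment p f 1 b ^ 2 ≤ tiltMoment p f 0 b * tiltMoment p f 2 b :=
  sum_sq_le_sum_mul_sum_of_sq_le_mul _ (fun x _ => by have := hp x; positivity)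
    (fun x _ => by have := hp x; positivity) fun x _ => le_of_eq (by ring)

theorem tiltVariance_nonneg [Nonempty ι] (hp : ∀ x, 0 < p x) (b : ℝ) :
    0 ≤ tiltVariance p f b := by
  have hZ := tiltMoment_zero_pos p f hp b
  have hCS := tiltMoment_one_sq_le p f (fun x => (hp x).le) b
  rw [tiltVariance, tiltMean, sub_nonneg, div_pow, div_le_div_iff₀ (by positivity) hZ]
  nlinarith

theorem hasDerivAt_tiltMean {b : ℝ} (hZ : tiltMoment p f 0 b ≠ 0) :
    HasDerivAt (tiltMean p f) (tiltVariance p f b) b := by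
  refine ((hasDerivAt_tiltMoment p f 1 b).div (hasDerivAt_tiltMoment p f 0 b) hZ).congr_deriv ?_
  unfold tiltVariance tiltMean
  field_simp

theorem sum_tilt_mul_pow (n : ℕ) (b : ℝ) :
    ∑ x, tilt p f b x * f x ^ n = tiltMoment p f n b / tiltMoment p f 0 b := by
  rw [tiltMoment, sum_div]
  refine sum_congr rfl fun x _ => ?_
  rw [tilt]
  ring

theorem log_tilt_div {x : ι} (hpx : p x ≠ 0) {b : ℝ} (hZ : tiltMoment p f 0 b ≠ 0) :
    log (tilt p f b x / p x) = b * f x - log (tiltMoment p f 0 b) := by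
  rw [tilt, mul_div_assoc, mul_div_cancel_left₀ _ hpx, log_div (exp_ne_zero _) hZ, log_exp]

theorem sum_tilt_mul_log_tilt_div [Nonempty ι] (hp : ∀ x, 0 < p x) (b : ℝ) :
    ∑ x, tilt p f b x * log (tilt p f b x / p x) = b * tiltMean p f b - log (tiltMoment p f 0 b) := by
  have hZ := (tiltMoment_zero_pos p f hp b).ne'
  have hmass := sum_tilt_mul_pow p f 0 b
  have hmean := sum_tilt_mul_pow p f 1 b
  simp only [pow_zero, pow_one, mul_one, div_self hZ] at hmass hmean
  simp only [log_tilt_div p f (hp _).ne' hZ, mul_sub, mul_left_comm _ b, sum_sub_distrib,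
    ← mul_sum, ← sum_mul, hmass, hmean, one_mul, tiltMean]

theorem hasDerivAt_mul_tiltMean_sub_log {b : ℝ} (hZ : tiltMoment p f 0 b ≠ 0) :
    HasDerivAt (fun b => b * tiltMean p f b - log (tiltMoment p f 0 b))
      (b * tiltVariance p f b) b := by
  refine (((hasDerivAt_id' b).fun_mul (hasDerivAt_tiltMean p f hZ)).fun_sub
    ((hasDerivAt_tiltMoment p f 0 b).log hZ)).congr_deriv ?_
  rw [tiltMean]
  ring

end TiltedFamily

theorem kl_monotoneOn_nonneg_general {X : Type*} [Fintype X] [Nonempty X]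
    (p : X → ℝ) (hp0 : ∀ x, 0 < p x)
    (f : X → ℝ)
    (q : ℝ → X → ℝ)
    (hq : ∀ b x, q b x = p x * Real.exp (b * f x) / (∑ y, p y * Real.exp (b * f y))) :
    MonotoneOn (fun b : ℝ => ∑ x, q b x * Real.log (q b x / p x)) (Set.Ici 0) := by
  obtain rfl : q = tilt p f := by
    ext b x
    rw [hq, tilt, tiltMoment_zero]
  simp only [sum_tilt_mul_log_tilt_div p f hp0]
  have hD (b : ℝ) := hasDerivAt_mul_tiltMean_sub_log p f (tiltMoment_zero_pos p f hp0 b).ne'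
  refine monotoneOn_of_hasDerivWithinAt_nonneg (convex_Ici 0)
    (continuousOn_of_forall_continuousAt fun b _ => (hD b).continuousAt)
    (fun b _ => (hD b).hasDerivWithinAt) fun b hb => ?_
  rw [interior_Ici] at hb
  exact mul_nonneg hb.le (tiltVariance_nonneg p f hp0 b)

theorem kl_monotoneOn_nonneg {X : Type*} [Fintype X] [Nonempty X]
    (p : X → ℝ) (hp0 : ∀ x, 0 < p x) (hp1 : ∑ x, p x = 1)
    (f : X → ℝ)
    (q : ℝ → X → ℝ)
    (hq : ∀ b x, q b x = p x * Real.exp (b * f x) / (∑ y, p y * Real.exp (b * f y))) :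
    MonotoneOn (fun b : ℝ => ∑ x, q b x * Real.log (q b x / p x)) (Set.Ici 0) :=
  kl_monotoneOn_nonneg_general p hp0 f q hq
end
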